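/- arXiv:math/9906011 — 6 statements merged into one kernel-verified Lean document; each statement's English description precedes it below -/
import Mathlib

section
/- Every triangle-free uniquely (k+1)-colorable graph (with k ≥ 2) is uniquely k-list colorable. -/
/-- A coloring `c` of the vertices is proper if adjacent vertices get different colors. -/
def IsProperColoring {V α : Type*} (G : SimpleGraph V) (c : V → α) : Prop :=
  ∀ ⦃u w⦄, G.Adj u w → c u ≠ c w

/-- `c` is an `L`-coloring of `G`: a proper coloring with `c v ∈ L v` for every vertex `v`. -/
def IsListColoring {V : Type*} (G : SimpleGraph V) (L : V → Finset ℕ) (c : V → ℕ) : Prop :=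
  IsProperColoring G c ∧ ∀ v, c v ∈ L v

/-- `G` is uniquely `f`-list colorable: there is a list assignment giving each vertex `v`
a list of exactly `f v` colors, from which `G` has exactly one list coloring. -/
def UniquelyFListColorable {V : Type*} (G : SimpleGraph V) (f : V → ℕ) : Prop :=
  ∃ L : V → Finset ℕ, (∀ v, (L v).card = f v) ∧ ∃! c, IsListColoring G L c

/-- `G` is uniquely `k`-list colorable. -/
def UniquelyKListColorable {V : Type*} (G : SimpleGraph V) (k : ℕ) : Prop :=
  UniquelyFListColorable G (fun _ => k)

/-- The m-number of `G`: the least `k` for which `G` is not uniquely `k`-list colorable. -/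
noncomputable def mNumber {V : Type*} (G : SimpleGraph V) : ℕ :=
  sInf {k | ¬ UniquelyKListColorable G k}

/-!
Let `c` be the unique `(k+1)`-colouring, with classes `C₀, …, Cₖ`. By uniqueness every vertex
has a neighbour in every other class. Colouring each vertex outside `Cᵢ` by such a neighbour, and
`Cᵢ` by one extra colour, is proper because `G` is triangle-free; since `G` is not
`k`-colourable, `|Cᵢ| ≥ k`. So for every `i < j` some vertex of `Cᵢ` can have `j` removed from
its list `{0, …, k}`; every other vertex drops some colour other than its own. An arbitrary list
colouring `d` induces the same partition as `c`, so `d = σ ∘ c` with `σ` injective; the removed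
colours force `σ i ≤ i` for all `i`, hence `σ = id` and `d = c`.
-/

open Finset Function

def HasUniqueColorPartition {V : Type*} (G : SimpleGraph V) (α : Type*) : Prop :=
  ∀ c₁ c₂ : V → α, IsProperColoring G c₁ → IsProperColoring G c₂ →
    ∀ u w, c₁ u = c₁ w ↔ c₂ u = c₂ w

theorem eq_self_of_injective_of_apply_le {α : Type*} [LinearOrder α] [WellFoundedLT α]
    {f : α → α} (hf : Injective f) (hle : ∀ a, f a ≤ a) (a : α) : f a = a := by
  induction a using WellFoundedLT.induction with
  | _ a ih =>
    by_contra hne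
    exact hne (hf (ih _ (lt_of_le_of_ne (hle a) hne)))

theorem exists_injective_comp_eq_of_fibers_eq {V α β : Type*} {c : V → α} {d : V → β}
    (hc : Surjective c) (h : ∀ u w, c u = c w ↔ d u = d w) :
    ∃ σ : α → β, Injective σ ∧ d = σ ∘ c := by
  refine ⟨d ∘ surjInv hc, fun i j hij => ?_, funext fun v => ?_⟩
  · rw [← surjInv_eq hc i, ← surjInv_eq hc j]
    exact (h _ _).2 hij
  · exact (h _ _).1 (surjInv_eq hc (c v)).symm

theorem exists_forbidden_colors {V α : Type*} [LinearOrder α] [Nontrivial α] {c : V → α}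
    (hemb : ∀ i, Nonempty ({j // i < j} ↪ {v // c v = i})) :
    ∃ m : V → α, (∀ v, m v ≠ c v) ∧ ∀ i j, i < j → ∃ v, c v = i ∧ m v = j := by
  have e := fun i => (hemb i).some
  -- `f` assigns to each pair `i < j` its own vertex of colour `i`, which is then told to avoid `j`.
  let f : (Σ i, {j // i < j}) ↪ V :=
    (Embedding.sigmaMap (Embedding.refl α) e).trans (Equiv.sigmaFiberEquiv c).toEmbedding
  have hcf : ∀ p, c (f p) = p.1 := fun p => (e p.1 p.2).2
  let m : V → α := extend f (fun p => p.2.1) fun v => (exists_ne (c v)).choose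
  refine ⟨m, fun v => ?_, fun i j hij => ⟨f ⟨i, j, hij⟩, hcf _, f.injective.extend_apply _ _ _⟩⟩
  by_cases hv : ∃ p, f p = v
  · obtain ⟨p, rfl⟩ := hv
    rw [hcf, show m (f p) = p.2.1 from f.injective.extend_apply _ _ _]
    exact p.2.2.ne'
  · rw [show m v = _ from extend_apply' _ _ _ hv]
    exact (exists_ne (c v)).choose_spec

variable {V : Type*} {G : SimpleGraph V}

theorem colorable_card_add_one_of_forall_exists_adj (htf : G.CliqueFree 3) {S : Finset V}
    (hS : G.IsIndepSet S) (hdom : ∀ v ∉ S, ∃ w ∈ S, G.Adj v w) : G.Colorable (#S + 1) := by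
  classical
  choose nb hnbS hadj using hdom
  let d : V → Option S := fun v => if h : v ∈ S then none else some ⟨nb v h, hnbS v h⟩
  have hd : ∀ {u w}, G.Adj u w → d u ≠ d w := by
    intro u w huw
    by_cases hu : u ∈ S <;> by_cases hw : w ∈ S <;>
      simp only [d, hu, hw, ↓reduceDIte, ne_eq, not_true_eq_false, reduceCtorEq,
        not_false_eq_true, Option.some.injEq, Subtype.mk.injEq]
    · exact hS hu hw huw.ne huw
    · -- `u` and `w` with a common neighbour in `S` would span a triangle
      intro heq
      refine htf {u, w, nb w hw} (SimpleGraph.is3Clique_triple_iff.2 ⟨huw, ?_, hadj w hw⟩)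
      simpa [heq] using hadj u hu
  simpa using (SimpleGraph.Coloring.mk d hd).colorable

variable {α : Type*}

theorem exists_adj_of_hasUniqueColorPartition (huniq : HasUniqueColorPartition G α)
    {c : V → α} (hc : IsProperColoring G c) {v : V} {i : α} (hi : i ∈ Set.range c)
    (hv : c v ≠ i) : ∃ w, G.Adj v w ∧ c w = i := by
  classical
  by_contra! hno
  obtain ⟨u, rfl⟩ := hi
  -- otherwise `v` could be recoloured with the colour of `u`, changing the partition
  have hc' : IsProperColoring G (update c v (c u)) := by
    intro a b hab
    by_cases ha : a = v <;> by_cases hb : b = v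
    · subst ha hb
      exact absurd hab (G.loopless.irrefl _)
    · subst ha
      simpa [hb] using (hno b hab).symm
    · subst hb
      simpa [ha] using hno a hab.symm
    · simpa [ha, hb] using hc hab
  have huv : u ≠ v := by rintro rfl; exact hv rfl
  exact hv ((huniq c _ hc hc' v u).2 (by simp [huv]))

theorem colorable_card_colorClass_add_one [Fintype V] [DecidableEq α]
    (htf : G.CliqueFree 3) (huniq : HasUniqueColorPartition G α) {c : V → α}
    (hc : IsProperColoring G c) (hsurj : Surjective c) (i : α) :
    G.Colorable (#{v | c v = i} + 1) := by
  refine colorable_card_add_one_of_forall_exists_adj htf ?_ fun v hv => ?_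
  · intro u hu w hw _ huw
    simp only [coe_filter, mem_univ, true_and, Set.mem_ofPred_eq] at hu hw
    exact hc huw (hu.trans hw.symm)
  · simp only [mem_filter, mem_univ, true_and] at hv ⊢
    obtain ⟨w, hvw, hw⟩ := exists_adj_of_hasUniqueColorPartition huniq hc (hsurj i) hv
    exact ⟨w, hw, hvw⟩

theorem uniquelyKListColorable_of_forbidden_colors {n : ℕ} {c m : V → Fin (n + 1)}
    (huniq : HasUniqueColorPartition G (Fin (n + 1))) (hc : IsProperColoring G c)
    (hsurj : Surjective c) (hm : ∀ v, m v ≠ c v)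
    (hcover : ∀ i j, i < j → ∃ v, c v = i ∧ m v = j) :
    UniquelyKListColorable G n := by
  refine ⟨fun v => (range (n + 1)).erase (m v), fun v => ?_, fun v => c v, ⟨?_, fun v => ?_⟩, ?_⟩
  · simp [card_erase_of_mem (mem_range.2 (m v).isLt)]
  · exact fun u w huw h => hc huw (Fin.ext h)
  · exact mem_erase.2 ⟨fun h => hm v (Fin.ext h).symm, mem_range.2 (c v).isLt⟩
  rintro d ⟨hd, hdL⟩
  have hdlt : ∀ v, d v < n + 1 := fun v => by simpa using mem_of_mem_erase (hdL v)
  let d' : V → Fin (n + 1) := fun v => ⟨d v, hdlt v⟩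
  have hd' : IsProperColoring G d' := fun u w huw h => hd huw (congrArg Fin.val h)
  obtain ⟨σ, hσ, hd'σ⟩ := exists_injective_comp_eq_of_fibers_eq hsurj (huniq c d' hc hd')
  -- `σ i > i` is impossible: `σ i` is missing from the list of some vertex of colour `i`
  have hσle : ∀ i, σ i ≤ i := by
    intro i
    by_contra! hlt
    obtain ⟨v, rfl, hmv⟩ := hcover _ _ hlt
    have : d v ≠ m v := (mem_erase.1 (hdL v)).1
    exact this (by rw [hmv]; exact congrArg Fin.val (congrFun hd'σ v))
  funext v
  have hσc : σ (c v) = c v := eq_self_of_injective_of_apply_le hσ hσle _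
  simpa [d'] using congrArg Fin.val ((congrFun hd'σ v).trans hσc)

/-- Every triangle-free uniquely `(k+1)`-colorable graph (`k ≥ 2`) is
uniquely `k`-list colorable. -/
theorem triangleFree_uniquely_colorable_implies_UkLC
    {V : Type} [Fintype V] (G : SimpleGraph V) (k : ℕ) (hk : 2 ≤ k)
    (htf : G.CliqueFree 3)
    (hchrom : G.chromaticNumber = (k + 1 : ℕ))
    (hunique : ∀ c₁ c₂ : V → Fin (k + 1), IsProperColoring G c₁ → IsProperColoring G c₂ →
      ∀ u w, c₁ u = c₁ w ↔ c₂ u = c₂ w) :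
    UniquelyKListColorable G k := by
  classical
  have hncol : ¬ G.Colorable k := fun h => by
    have := hchrom ▸ h.chromaticNumber_le
    norm_cast at this
    omega
  obtain ⟨C⟩ : G.Colorable (k + 1) := by
    rw [← SimpleGraph.chromaticNumber_le_iff_colorable, hchrom]
  have hC : IsProperColoring G C := fun _ _ h => C.valid h
  have hsurj : Surjective C := SimpleGraph.le_chromaticNumber_iff_forall_surjective.1 hchrom.ge C
  have hemb : ∀ i, Nonempty ({j // i < j} ↪ {v // C v = i}) := by
    intro i
    have hclass : k ≤ #{v | C v = i} := by
      by_contra! h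
      exact hncol ((colorable_card_colorClass_add_one htf hunique hC hsurj i).mono (by omega))
    refine Function.Embedding.nonempty_of_card_le ?_
    rw [Fintype.card_subtype, Fintype.card_subtype, filter_lt_eq_Ioi, Fin.card_Ioi]
    omega
  have : Nontrivial (Fin (k + 1)) := Fin.nontrivial_iff_two_le.2 (by omega)
  obtain ⟨m, hm, hcover⟩ := exists_forbidden_colors hemb
  exact uniquelyKListColorable_of_forbidden_colors hunique hC hsurj hm hcover
end

section
/- If G is a uniquely f-list colorable graph, then the sum over all vertices v of f(v) is at most n(G) + e(G), where n(G) is the number of vertices and e(G) the number of edges of G. -/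
open Finset MvPolynomial

namespace Lagrange

variable {ι F : Type*} [Field F] [DecidableEq ι] {s : Finset ι} {x : ι → F}

theorem sum_pow_mul_nodalWeight_eq_zero (hx : Set.InjOn x s) {a : ℕ} (ha : a + 1 < #s) :
    ∑ i ∈ s, x i ^ a * nodalWeight s x i = 0 := by
  have hdeg : ((Polynomial.X : Polynomial F) ^ a).degree < #s := by
    rw [Polynomial.degree_X_pow]; exact_mod_cast (Nat.lt_succ_self a).trans ha
  have := coeff_eq_sum hx hdeg
  rw [Polynomial.coeff_X_pow, if_neg (by omega)] at this
  simpa [nodalWeight, prod_inv_distrib, div_eq_mul_inv] using this.symm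

end Lagrange

section CoefficientFormula

open Lagrange

variable {V ι F : Type*} [Fintype V] [DecidableEq V] [DecidableEq ι] [Field F]
  (S : V → Finset ι) {x : ι → F}

/-- For `P` of degree at most `∑ v, (#(S v) - 1)` this is the coefficient of
`∏ v, X v ^ (#(S v) - 1)` in `P` (Karasev–Petrov, Lasoń). -/
noncomputable def gridFunctional (x : ι → F) (P : MvPolynomial V F) : F :=
  ∑ p ∈ Fintype.piFinset S, eval (x ∘ p) P * ∏ v, nodalWeight (S v) x (p v)

theorem gridFunctional_monomial_one (m : V →₀ ℕ) :
    gridFunctional S x (monomial m 1) = ∏ v, ∑ t ∈ S v, x t ^ m v * nodalWeight (S v) x t := by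
  rw [gridFunctional, prod_univ_sum]
  refine sum_congr rfl fun p _ => ?_
  rw [eval_monomial, one_mul, Finsupp.prod_fintype _ _ (fun _ => pow_zero _),
    ← prod_mul_distrib]
  rfl

theorem gridFunctional_eq_zero_of_totalDegree_lt (hx : Function.Injective x)
    (P : MvPolynomial V F) (hP : P.totalDegree < ∑ v, (#(S v) - 1)) :
    gridFunctional S x P = 0 := by
  have hlin : gridFunctional S x P =
      ∑ m ∈ P.support, coeff m P * gridFunctional S x (monomial m 1) := by
    conv_lhs => rw [gridFunctional, P.as_sum]
    simp only [gridFunctional, map_sum, sum_mul, mul_sum]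
    rw [sum_comm]
    refine sum_congr rfl fun m _ => sum_congr rfl fun p _ => ?_
    simp only [eval_monomial]
    ring
  rw [hlin]
  refine sum_eq_zero fun m hm => ?_
  have hdeg : ∑ v, m v < ∑ v, (#(S v) - 1) := by
    refine lt_of_le_of_lt ?_ hP
    simpa [Finsupp.sum_fintype] using le_totalDegree hm
  obtain ⟨v, -, hv⟩ := exists_lt_of_sum_lt hdeg
  rw [gridFunctional_monomial_one, prod_eq_zero (mem_univ v)
    (sum_pow_mul_nodalWeight_eq_zero hx.injOn (by omega)), mul_zero]

theorem sum_card_sub_one_le_totalDegree (hx : Function.Injective x) (P : MvPolynomial V F)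
    (h : ∃! p, p ∈ Fintype.piFinset S ∧ eval (x ∘ p) P ≠ 0) :
    ∑ v, (#(S v) - 1) ≤ P.totalDegree := by
  obtain ⟨c, ⟨hc, hPc⟩, huniq⟩ := h
  by_contra! hlt
  apply mul_ne_zero hPc (prod_ne_zero_iff.mpr fun v _ =>
    nodalWeight_ne_zero hx.injOn (Fintype.mem_piFinset.mp hc v))
  rw [← gridFunctional_eq_zero_of_totalDegree_lt S hx P hlt, gridFunctional]
  refine (sum_eq_single_of_mem (f := fun p => eval (x ∘ p) P * ∏ v, nodalWeight (S v) x (p v))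
    c hc fun p hp hpc => ?_).symm
  rw [not_ne_iff.mp fun hP => hpc (huniq p ⟨hp, hP⟩), zero_mul]

end CoefficientFormula

theorem IsProperColoring.comp_iff {V α β : Type*} {G : SimpleGraph V} {x : α → β}
    (hx : Function.Injective x) {c : V → α} :
    IsProperColoring G (x ∘ c) ↔ IsProperColoring G c :=
  forall₂_congr fun _ _ => imp_congr_right fun _ => hx.ne_iff

namespace SimpleGraph

variable {V : Type*} (G : SimpleGraph V) [Fintype G.edgeSet] (R : Type*) [CommRing R]

/-- Each edge is oriented by `Quot.out`; the orientation only affects the sign. -/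
noncomputable def graphPolynomial : MvPolynomial V R :=
  ∏ e ∈ G.edgeFinset, (X e.out.1 - X e.out.2)

theorem totalDegree_graphPolynomial_le [Nontrivial R] :
    (G.graphPolynomial R).totalDegree ≤ #G.edgeFinset := by
  refine (totalDegree_finsetProd _ _).trans ?_
  rw [card_eq_sum_ones]
  refine sum_le_sum fun e _ => (totalDegree_sub _ _).trans ?_
  simp [totalDegree_X]

theorem eval_graphPolynomial_ne_zero_iff [IsDomain R] (y : V → R) :
    eval y (G.graphPolynomial R) ≠ 0 ↔ IsProperColoring G y := by
  simp only [graphPolynomial, eval_prod, eval_sub, eval_X, prod_ne_zero_iff, sub_ne_zero,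
    mem_edgeFinset]
  constructor
  · intro h u w huw
    have hout : s((s(u, w)).out.1, (s(u, w)).out.2) = s(u, w) := Quot.out_eq _
    have := h _ (G.mem_edgeSet.mpr huw)
    rcases Sym2.eq_iff.mp hout with ⟨hu, hw⟩ | ⟨hw, hu⟩ <;> rw [hu, hw] at this
    exacts [this, this.symm]
  · intro h e he
    rw [← Quot.out_eq e] at he
    exact h he

end SimpleGraph

theorem sum_card_sub_one_le_card_edgeFinset {V : Type*} [Fintype V] [DecidableEq V]
    (G : SimpleGraph V) [DecidableRel G.Adj] (L : V → Finset ℕ)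
    (h : ∃! c, IsListColoring G L c) :
    ∑ v, (#(L v) - 1) ≤ #G.edgeFinset := by
  have hx : Function.Injective (Nat.cast : ℕ → ℚ) := Nat.cast_injective
  have hgrid : ∀ p, p ∈ Fintype.piFinset L ∧ eval (Nat.cast ∘ p) (G.graphPolynomial ℚ) ≠ 0 ↔
      IsListColoring G L p := fun p => by
    rw [Fintype.mem_piFinset, G.eval_graphPolynomial_ne_zero_iff, IsProperColoring.comp_iff hx,
      IsListColoring, and_comm]
  exact (sum_card_sub_one_le_totalDegree L hx _ ((existsUnique_congr hgrid).mpr h)).trans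
    (G.totalDegree_graphPolynomial_le ℚ)

/-- If `G` is uniquely `f`-list colorable, then `∑ v, f v ≤ n(G) + e(G)`. -/
theorem sum_f_le_of_UfLC
    {V : Type} [Fintype V] [DecidableEq V] (G : SimpleGraph V) [DecidableRel G.Adj]
    (f : V → ℕ) (h : UniquelyFListColorable G f) :
    ∑ v, f v ≤ Fintype.card V + G.edgeFinset.card := by
  obtain ⟨L, hL, hL_unique⟩ := h
  have key := sum_card_sub_one_le_card_edgeFinset G L hL_unique
  simp only [hL] at key
  calc ∑ v, f v ≤ ∑ v, ((f v - 1) + 1) := sum_le_sum fun v _ => le_tsub_add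
    _ = ∑ v, (f v - 1) + Fintype.card V := by
      rw [sum_add_distrib, sum_const, card_univ, smul_eq_mul, mul_one]
    _ ≤ Fintype.card V + #G.edgeFinset := by omega
end

section
/- For every graph G there exists a function f : V(G) → ℕ such that G is uniquely f-list colorable and the sum over all vertices v of f(v) equals n(G) + e(G). -/
/-! Label the vertices injectively by `ℓ : V → ℕ` and give `v` the list consisting of `ℓ v` and
the labels of its neighbours with smaller label. Any list coloring `c` then agrees with `ℓ`, by
strong induction on `ℓ v`: if `c v = ℓ u` for such a neighbour `u`, then `c u = ℓ u = c v`. Every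
edge contributes to exactly one list, the one at its endpoint with larger label, so the list
sizes sum to `n(G) + e(G)`. -/

open Finset

namespace SimpleGraph

variable {V : Type*} (G : SimpleGraph V) [Fintype V] [DecidableRel G.Adj]
  {α : Type*} [LinearOrder α]

def lowerNeighborFinset (ℓ : V → α) (v : V) : Finset V :=
  {u ∈ G.neighborFinset v | ℓ u < ℓ v}

def upperNeighborFinset (ℓ : V → α) (v : V) : Finset V :=
  {u ∈ G.neighborFinset v | ℓ v < ℓ u}

theorem sum_card_lowerNeighborFinset_eq_sum_card_upperNeighborFinset (ℓ : V → α) :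
    ∑ v, #(G.lowerNeighborFinset ℓ v) = ∑ v, #(G.upperNeighborFinset ℓ v) := by
  simp only [lowerNeighborFinset, upperNeighborFinset, neighborFinset_eq_filter, filter_filter,
    card_filter]
  rw [sum_comm]
  simp only [G.adj_comm]

theorem card_lowerNeighborFinset_add_card_upperNeighborFinset {ℓ : V → α}
    (hℓ : IsProperColoring G ℓ) (v : V) :
    #(G.lowerNeighborFinset ℓ v) + #(G.upperNeighborFinset ℓ v) = G.degree v := by
  rw [← card_neighborFinset_eq_degree, ← card_filter_add_card_filter_not (s := G.neighborFinset v)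
    (fun u => ℓ u < ℓ v)]
  congr 2
  exact filter_congr fun u hu =>
    (not_lt.trans (hℓ ((G.mem_neighborFinset v u).mp hu)).le_iff_lt).symm

theorem sum_card_lowerNeighborFinset {ℓ : V → α} (hℓ : IsProperColoring G ℓ) :
    ∑ v, #(G.lowerNeighborFinset ℓ v) = #G.edgeFinset := by
  have h := G.sum_degrees_eq_twice_card_edges
  simp only [← G.card_lowerNeighborFinset_add_card_upperNeighborFinset hℓ, sum_add_distrib,
    ← sum_card_lowerNeighborFinset_eq_sum_card_upperNeighborFinset] at h
  omega

def lowerColorList (ℓ : V → ℕ) (v : V) : Finset ℕ :=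
  insert (ℓ v) ((G.lowerNeighborFinset ℓ v).image ℓ)

theorem card_lowerColorList {ℓ : V → ℕ} (hℓ : Function.Injective ℓ) (v : V) :
    #(G.lowerColorList ℓ v) = #(G.lowerNeighborFinset ℓ v) + 1 := by
  rw [lowerColorList, card_insert_of_notMem, card_image_of_injective _ hℓ]
  simpa [lowerNeighborFinset] using fun _ _ h => h.ne

theorem isListColoring_lowerColorList {ℓ : V → ℕ} (hℓ : IsProperColoring G ℓ) :
    IsListColoring G (G.lowerColorList ℓ) ℓ :=
  ⟨hℓ, fun _ => mem_insert_self _ _⟩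

theorem eq_of_isListColoring_lowerColorList {ℓ c : V → ℕ}
    (hc : IsListColoring G (G.lowerColorList ℓ) c) : c = ℓ := by
  funext v
  induction h : ℓ v using Nat.strong_induction_on generalizing v with
  | _ n ih =>
    subst h
    rcases mem_insert.mp (hc.2 v) with hv | hv
    · exact hv
    · obtain ⟨u, hu, hcv⟩ := mem_image.mp hv
      obtain ⟨hadj, hlt⟩ := mem_filter.mp hu
      exact absurd (hcv.symm.trans (ih _ hlt u rfl).symm)
        (hc.1 ((G.mem_neighborFinset v u).mp hadj))

end SimpleGraph

theorem exists_f_UfLC_sum_eq_general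
    {V : Type} [Fintype V] (G : SimpleGraph V) [DecidableRel G.Adj] :
    ∃ f : V → ℕ, UniquelyFListColorable G f ∧
      ∑ v, f v = Fintype.card V + G.edgeFinset.card := by
  set ℓ : V → ℕ := fun v => Fintype.equivFin V v
  have hℓ : Function.Injective ℓ := Fin.val_injective.comp (Fintype.equivFin V).injective
  have hproper : IsProperColoring G ℓ := fun _ _ h => hℓ.ne (G.ne_of_adj h)
  refine ⟨fun v => #(G.lowerColorList ℓ v), ⟨G.lowerColorList ℓ, fun _ => rfl, ℓ,
    G.isListColoring_lowerColorList hproper, fun _ => G.eq_of_isListColoring_lowerColorList⟩, ?_⟩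
  simp only [G.card_lowerColorList hℓ, sum_add_distrib, G.sum_card_lowerNeighborFinset hproper,
    sum_const, card_univ, smul_eq_mul, mul_one, add_comm]

/-- For every graph `G` there is `f : V(G) → ℕ` such that `G` is uniquely
`f`-list colorable and `∑ v, f v = n(G) + e(G)`. -/
theorem exists_f_UfLC_sum_eq
    {V : Type} [Fintype V] [DecidableEq V] (G : SimpleGraph V) [DecidableRel G.Adj] :
    ∃ f : V → ℕ, UniquelyFListColorable G f ∧
      ∑ v, f v = Fintype.card V + G.edgeFinset.card :=
  exists_f_UfLC_sum_eq_general G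
end

section
/- Let L be a k-list assignment to a graph G such that G has a unique L-coloring c. Then for every vertex v of G, the number of distinct colors that c assigns to the neighbors of v is at least k - 1. -/
/-! Recolouring `v` with any colour of `L v` that is absent from `c v` and from the neighbourhood
of `v` yields a second `L`-coloring, so all of `L v` except `c v` appears on the neighbourhood. -/

theorem IsProperColoring.update {V α : Type*} [DecidableEq V] {G : SimpleGraph V} {c : V → α}
    (hc : IsProperColoring G c) {v : V} {a : α} (ha : ∀ w, G.Adj v w → c w ≠ a) :
    IsProperColoring G (Function.update c v a) := by
  intro u w huw
  rcases eq_or_ne u v with rfl | hu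
  · rw [Function.update_self, Function.update_of_ne (G.ne_of_adj huw).symm]
    exact (ha w huw).symm
  rcases eq_or_ne w v with rfl | hw
  · rw [Function.update_self, Function.update_of_ne hu]
    exact ha u huw.symm
  · rw [Function.update_of_ne hu, Function.update_of_ne hw]
    exact hc huw

theorem IsListColoring.update {V : Type*} [DecidableEq V] {G : SimpleGraph V}
    {L : V → Finset ℕ} {c : V → ℕ} (hc : IsListColoring G L c) {v : V} {a : ℕ}
    (haL : a ∈ L v) (ha : ∀ w, G.Adj v w → c w ≠ a) :
    IsListColoring G L (Function.update c v a) :=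
  ⟨hc.1.update ha, Function.forall_update_iff _ (p := fun w b => b ∈ L w) |>.2
    ⟨haL, fun w _ => hc.2 w⟩⟩

theorem IsListColoring.erase_subset_image_neighborFinset_of_unique {V : Type*}
    {G : SimpleGraph V} {L : V → Finset ℕ} {c : V → ℕ} (hc : IsListColoring G L c)
    (huniq : ∀ c', IsListColoring G L c' → c' = c) (v : V) [Fintype (G.neighborSet v)] :
    (L v).erase (c v) ⊆ (G.neighborFinset v).image c := by
  classical
  intro a ha
  obtain ⟨hav, haL⟩ := Finset.mem_erase.1 ha
  by_contra hN
  have hfree : ∀ w, G.Adj v w → c w ≠ a := fun w hw hwa =>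
    hN (Finset.mem_image.2 ⟨w, (G.mem_neighborFinset v w).2 hw, hwa⟩)
  have hrecolor := congrFun (huniq _ (hc.update haL hfree)) v
  rw [Function.update_self] at hrecolor
  exact hav hrecolor

theorem neighbors_see_many_colors_general
    {V : Type} [Fintype V] (G : SimpleGraph V) [DecidableRel G.Adj]
    (k : ℕ) (L : V → Finset ℕ) (hL : ∀ v, (L v).card = k)
    (c : V → ℕ) (hc : IsListColoring G L c)
    (huniq : ∀ c', IsListColoring G L c' → c' = c) :
    ∀ v, k - 1 ≤ ((G.neighborFinset v).image c).card := fun v =>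
  calc k - 1 = ((L v).erase (c v)).card := by rw [Finset.card_erase_of_mem (hc.2 v), hL v]
    _ ≤ _ := Finset.card_le_card (hc.erase_subset_image_neighborFinset_of_unique huniq v)

/-- If `L` is a `k`-list assignment to `G` from which `G` has a unique
`L`-coloring `c`, then every vertex sees at least `k - 1` distinct colors on its neighborhood. -/
theorem neighbors_see_many_colors
    {V : Type} [Fintype V] [DecidableEq V] (G : SimpleGraph V) [DecidableRel G.Adj]
    (k : ℕ) (L : V → Finset ℕ) (hL : ∀ v, (L v).card = k)
    (c : V → ℕ) (hc : IsListColoring G L c)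
    (huniq : ∀ c', IsListColoring G L c' → c' = c) :
    ∀ v, k - 1 ≤ ((G.neighborFinset v).image c).card :=
  neighbors_see_many_colors_general G k L hL c hc huniq
end

section
/- For every bipartite graph G with at least one vertex, m(G) ≤ 2 + log₂ n(G). -/
/-!
Let `c` be the unique `L`-coloring, `|L v| = k`, and delete `c v` from each list. A bipartite graph
on fewer than `2 ^ (k - 1)` vertices is colorable from any lists of `k - 1` colors: for a random set
`σ` of colors, a vertex fails to have a list color in `σ` (on one side of the bipartition), resp.
outside `σ` (on the other side), with probability at most `2 ^ (1 - k)`, so some `σ` serves every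
vertex, and the resulting coloring is proper. It is a second `L`-coloring, so `k` with
`2 ^ (k - 1) > n` is not a uniquely colorable list size; take `k = ⌊log₂ n⌋ + 2`.
-/

open Finset

namespace Finset

variable {α : Type*} [DecidableEq α]

theorem two_pow_card_mul_card_filter_inter_eq_le {S T : Finset α} (hTS : T ⊆ S) (B : Finset α) :
    2 ^ #T * #{σ ∈ S.powerset | σ ∩ T = B} ≤ 2 ^ #S := by
  have hmaps : ∀ σ ∈ {σ ∈ S.powerset | σ ∩ T = B}, σ \ T ∈ (S \ T).powerset := by
    intro σ hσ
    simp only [mem_filter, mem_powerset] at hσ ⊢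
    exact sdiff_subset_sdiff hσ.1 le_rfl
  have hinj : Set.InjOn (· \ T) ↑{σ ∈ S.powerset | σ ∩ T = B} := by
    intro σ₁ h₁ σ₂ h₂ h
    simp only [mem_coe, mem_filter] at h₁ h₂
    rw [← sdiff_union_inter σ₁ T, ← sdiff_union_inter σ₂ T, h₁.2, h₂.2]
    exact congrArg (· ∪ B) h
  calc 2 ^ #T * #{σ ∈ S.powerset | σ ∩ T = B}
      ≤ 2 ^ #T * 2 ^ #(S \ T) := by
        gcongr
        simpa using card_le_card_of_injOn _ hmaps hinj
    _ = 2 ^ #S := by rw [← pow_add, add_comm, card_sdiff_add_card_eq_card hTS]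

theorem exists_subset_forall_inter_ne_of_card_lt_two_pow {ι : Type*} [Fintype ι] {S : Finset α}
    {T : ι → Finset α} {m : ℕ} (hTS : ∀ i, T i ⊆ S) (hT : ∀ i, m ≤ #(T i))
    (hcard : Fintype.card ι < 2 ^ m) (B : ι → Finset α) :
    ∃ σ ⊆ S, ∀ i, σ ∩ T i ≠ B i := by
  set bad := univ.biUnion fun i => {σ ∈ S.powerset | σ ∩ T i = B i}
  have hbad : 2 ^ m * #bad < 2 ^ m * #S.powerset := calc
    2 ^ m * #bad ≤ ∑ i, 2 ^ m * #{σ ∈ S.powerset | σ ∩ T i = B i} := by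
      rw [← mul_sum]
      exact Nat.mul_le_mul_left _ card_biUnion_le
    _ ≤ ∑ i, 2 ^ #(T i) * #{σ ∈ S.powerset | σ ∩ T i = B i} := by
      gcongr with i
      exacts [one_le_two, hT i]
    _ ≤ ∑ _i : ι, 2 ^ #S :=
      sum_le_sum fun i _ => two_pow_card_mul_card_filter_inter_eq_le (hTS i) _
    _ = Fintype.card ι * 2 ^ #S := by rw [sum_const, card_univ, smul_eq_mul]
    _ < 2 ^ m * #S.powerset := by rw [card_powerset]; gcongr
  obtain ⟨σ, hσS, hσ⟩ := exists_mem_notMem_of_card_lt_card (lt_of_mul_lt_mul_left' hbad)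
  refine ⟨σ, mem_powerset.1 hσS, fun i hi => hσ (mem_biUnion.2 ⟨i, mem_univ i, ?_⟩)⟩
  exact mem_filter.2 ⟨hσS, hi⟩

theorem exists_forall_exists_mem_iff_of_card_lt_two_pow {ι : Type*} [Fintype ι]
    {T : ι → Finset α} {m : ℕ} (hT : ∀ i, m ≤ #(T i)) (hcard : Fintype.card ι < 2 ^ m)
    (p : ι → Prop) : ∃ σ : Finset α, ∀ i, ∃ a ∈ T i, (a ∈ σ ↔ p i) := by
  classical
  obtain ⟨σ, -, hσ⟩ := exists_subset_forall_inter_ne_of_card_lt_two_pow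
    (fun i => subset_biUnion_of_mem T (mem_univ i)) hT hcard
    (fun i => if p i then ∅ else T i)
  refine ⟨σ, fun i => ?_⟩
  specialize hσ i
  by_cases hp : p i
  · obtain ⟨a, ha⟩ := nonempty_iff_ne_empty.2 (by simpa [hp] using hσ)
    exact ⟨a, (mem_inter.1 ha).2, by simp [hp, (mem_inter.1 ha).1]⟩
  · obtain ⟨a, haT, haσ⟩ := not_subset.1 (by simpa [hp, inter_eq_right] using hσ)
    exact ⟨a, haT, by simp [hp, haσ]⟩

end Finset

theorem SimpleGraph.Colorable.exists_isListColoring_of_card_lt_two_pow {V : Type*} [Fintype V]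
    {G : SimpleGraph V} (hG : G.Colorable 2) {L : V → Finset ℕ} {m : ℕ}
    (hL : ∀ v, m ≤ #(L v)) (hcard : Fintype.card V < 2 ^ m) : ∃ c, IsListColoring G L c := by
  obtain ⟨C⟩ := hG
  obtain ⟨σ, hσ⟩ := exists_forall_exists_mem_iff_of_card_lt_two_pow hL hcard (C · = 0)
  choose c hcL hcσ using hσ
  refine ⟨c, fun u w huw hc => C.valid huw ?_, hcL⟩
  have hfin2 : ∀ x y : Fin 2, (x = 0 ↔ y = 0) → x = y := by decide
  exact hfin2 _ _ ((hcσ u).symm.trans (hc ▸ hcσ w))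

theorem not_uniquelyKListColorable_of_card_lt_two_pow {V : Type*} [Fintype V] [Nonempty V]
    {G : SimpleGraph V} (hG : G.Colorable 2) {k : ℕ} (hk : Fintype.card V < 2 ^ (k - 1)) :
    ¬ UniquelyKListColorable G k := by
  rintro ⟨L, hL, c, ⟨-, hcL⟩, huniq⟩
  obtain ⟨g, hgproper, hgL⟩ := hG.exists_isListColoring_of_card_lt_two_pow
    (L := fun v => (L v).erase (c v)) (fun v => by rw [card_erase_of_mem (hcL v), hL v]) hk
  have hgc : g = c := huniq g ⟨hgproper, fun v => mem_of_mem_erase (hgL v)⟩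
  obtain ⟨v⟩ := ‹Nonempty V›
  exact ne_of_mem_erase (hgL v) (congrFun hgc v)

/-- For every bipartite graph `G` with at least one vertex,
`m(G) ≤ 2 + log₂ n(G)`. -/
theorem mNumber_le_log_of_bipartite
    {V : Type} [Fintype V] [Nonempty V] (G : SimpleGraph V) (hbip : G.Colorable 2) :
    (mNumber G : ℝ) ≤ 2 + Real.logb 2 (Fintype.card V) := by
  have hk : ¬ UniquelyKListColorable G (Nat.log 2 (Fintype.card V) + 2) :=
    not_uniquelyKListColorable_of_card_lt_two_pow hbip
      (Nat.lt_pow_succ_log_self one_lt_two _)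
  calc (mNumber G : ℝ) ≤ (Nat.log 2 (Fintype.card V) + 2 : ℕ) := by
        exact_mod_cast Nat.sInf_le hk
    _ ≤ 2 + Real.logb 2 (Fintype.card V) := by
        have hlog := Real.natLog_le_logb (Fintype.card V) 2
        push_cast at hlog ⊢
        linarith
end

section
/- The only bipartite χ'_ℓ-critical graphs with at least one edge are the stars K_{1,n}. -/
/-- `G` is `k`-choosable: from every `k`-list assignment, `G` has a list coloring. -/
def Choosable {V : Type*} (G : SimpleGraph V) (k : ℕ) : Prop :=
  ∀ L : V → Finset ℕ, (∀ v, (L v).card = k) → ∃ c, IsListColoring G L c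

/-- The list chromatic number of `G`: the least `k` such that `G` is `k`-choosable. -/
noncomputable def listChromaticNumber {V : Type*} (G : SimpleGraph V) : ℕ :=
  sInf {k | Choosable G k}

/-- `G` is `χ_ℓ`-critical: every proper subgraph has smaller list chromatic number. -/
def ListCritical {V : Type*} (G : SimpleGraph V) : Prop :=
  ∀ H : G.Subgraph, H ≠ ⊤ → listChromaticNumber H.coe < listChromaticNumber G
/-- The list chromatic index of `G`: the list chromatic number of its line graph. -/
noncomputable def listChromaticIndex {V : Type*} (G : SimpleGraph V) : ℕ :=
  listChromaticNumber G.lineGraph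

/-- The chromatic index of `G`: the chromatic number of its line graph. -/
noncomputable def chromaticIndex {V : Type*} (G : SimpleGraph V) : ℕ :=
  sInf {n | G.lineGraph.Colorable n}

/-- `G` is `χ'_ℓ`-critical: every proper subgraph has smaller list chromatic index. -/
def EdgeListCritical {V : Type*} (G : SimpleGraph V) : Prop :=
  ∀ H : G.Subgraph, H ≠ ⊤ → listChromaticIndex H.coe < listChromaticIndex G

/-- `G` is `χ'`-critical: every proper subgraph has smaller chromatic index. -/
def EdgeCritical {V : Type*} (G : SimpleGraph V) : Prop :=
  ∀ H : G.Subgraph, H ≠ ⊤ → chromaticIndex H.coe < chromaticIndex G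

/-!
A star is `χ'_ℓ`-critical because its line graph is complete: a proper subgraph has fewer edges,
and a complete graph on `m` vertices has list chromatic number `m`. Conversely, by Galvin's theorem
a bipartite `G` has `χ'_ℓ(G) ≤ Δ(G)`, which is already the list chromatic index of the star of
edges at a vertex of maximum degree; criticality forces this star to be all of `G`.

Galvin's theorem follows from König's edge colouring theorem (proved by Kempe chain swaps) and the
kernel method: a proper `Δ`-edge-colouring orients the line graph so that all out-degrees are below
`Δ` and every induced subdigraph has a kernel (a stable matching), and one colours kernel by kernel.
-/

open Finset SimpleGraph

section ListColoring

variable {W : Type*} {H : SimpleGraph W}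

theorem listChromaticNumber_le_of_choosable {k : ℕ} (h : Choosable H k) :
    listChromaticNumber H ≤ k :=
  Nat.sInf_le h

theorem exists_listColoring_on_of_card_le [DecidableEq W] (L : W → Finset ℕ) (S : Finset W)
    (hL : ∀ v ∈ S, #S ≤ #(L v)) :
    ∃ col : W → ℕ, (∀ v ∈ S, col v ∈ L v) ∧ ∀ a ∈ S, ∀ b ∈ S, H.Adj a b → col a ≠ col b := by
  induction S using Finset.induction_on with
  | empty => exact ⟨0, by simp, by simp⟩
  | @insert a S ha ih =>
    obtain ⟨col, hcolL, hcol⟩ :=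
      ih fun v hv => (card_le_card (subset_insert a S)).trans (hL v (mem_insert_of_mem hv))
    have hfree : (L a \ S.image col).Nonempty := by
      rw [← card_pos]
      have := hL a (mem_insert_self a S)
      rw [card_insert_of_notMem ha] at this
      have := card_image_le (s := S) (f := col)
      have := le_card_sdiff (S.image col) (L a)
      omega
    obtain ⟨x, hx⟩ := hfree
    rw [mem_sdiff, mem_image, not_exists] at hx
    have hcol' : ∀ v ∈ S, Function.update col a x v = col v := fun v hv =>
      Function.update_of_ne (ne_of_mem_of_not_mem hv ha) _ _
    refine ⟨Function.update col a x, ?_, ?_⟩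
    · intro v hv
      rcases mem_insert.1 hv with rfl | hv
      · simpa using hx.1
      · rw [hcol' v hv]; exact hcolL v hv
    · intro b hb d hd hbd
      rcases mem_insert.1 hb with rfl | hbS <;> rcases mem_insert.1 hd with rfl | hdS
      · exact (H.irrefl hbd).elim
      · rw [Function.update_self, hcol' d hdS]
        exact fun h => hx.2 d ⟨hdS, h.symm⟩
      · rw [Function.update_self, hcol' b hbS]
        exact fun h => hx.2 b ⟨hbS, h⟩
      · rw [hcol' b hbS, hcol' d hdS]; exact hcol b hbS d hdS hbd

theorem choosable_natCard [Finite W] : Choosable H (Nat.card W) := by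
  classical
  have := Fintype.ofFinite W
  intro L hL
  obtain ⟨col, hcolL, hcol⟩ := exists_listColoring_on_of_card_le (H := H) L univ
    (fun v _ => by rw [hL v, card_univ, Nat.card_eq_fintype_card])
  exact ⟨col, fun a b hab => hcol a (mem_univ a) b (mem_univ b) hab, fun v => hcolL v (mem_univ v)⟩

theorem choosable_listChromaticNumber [Finite W] : Choosable H (listChromaticNumber H) :=
  Nat.sInf_mem (s := {k | Choosable H k}) ⟨_, choosable_natCard⟩

theorem listChromaticNumber_eq_natCard_of_pairwise_adj [Finite W] (h : Pairwise H.Adj) :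
    listChromaticNumber H = Nat.card W := by
  refine (listChromaticNumber_le_of_choosable choosable_natCard).antisymm ?_
  obtain ⟨col, hcol, hcolL⟩ :=
    choosable_listChromaticNumber (H := H) (fun _ => range (listChromaticNumber H)) (by simp)
  have hinj : Function.Injective fun v => (⟨col v, mem_range.1 (hcolL v)⟩ : Fin _) :=
    fun a b hab => by_contra fun hne => hcol (h hne) (Fin.val_eq_of_eq hab)
  simpa using Nat.card_le_card_of_injective _ hinj

end ListColoring

namespace SimpleGraph

section LineGraph

theorem listChromaticIndex_eq_ncard_of_pairwise {W : Type*} [Finite W] {K : SimpleGraph W}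
    (h : K.edgeSet.Pairwise fun e f => ∃ w, w ∈ e ∧ w ∈ f) :
    listChromaticIndex K = K.edgeSet.ncard := by
  rw [listChromaticIndex, listChromaticNumber_eq_natCard_of_pairwise_adj, Nat.card_coe_set_eq]
  intro e f hef
  exact lineGraph_adj_iff_exists.2 ⟨hef, h e.2 f.2 (Subtype.coe_ne_coe.2 hef)⟩

variable {V : Type*} {G : SimpleGraph V}

theorem Subgraph.ncard_edgeSet_coe (H : G.Subgraph) : H.coe.edgeSet.ncard = H.edgeSet.ncard := by
  rw [← H.image_coe_edgeSet_coe,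
    Set.ncard_image_of_injective _ (Sym2.map.injective Subtype.val_injective)]

theorem Subgraph.pairwise_edgeSet_coe {H : G.Subgraph} {z : V} (hz : ∀ e ∈ H.edgeSet, z ∈ e) :
    H.coe.edgeSet.Pairwise fun e f => ∃ w, w ∈ e ∧ w ∈ f := by
  intro e he f hf _
  rw [Subgraph.edgeSet_coe, Set.mem_preimage] at he hf
  obtain ⟨a, ha, rfl⟩ := Sym2.mem_map.1 (hz _ he)
  obtain ⟨b, hb, hba⟩ := Sym2.mem_map.1 (hz _ hf)
  exact ⟨a, ha, Subtype.ext hba ▸ hb⟩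

theorem Subgraph.listChromaticIndex_coe_le [Finite V] (H : G.Subgraph) :
    listChromaticIndex H.coe ≤ H.edgeSet.ncard := by
  rw [← H.ncard_edgeSet_coe, ← Nat.card_coe_set_eq]
  exact listChromaticNumber_le_of_choosable choosable_natCard

theorem Subgraph.edgeSet_ssubset_of_ne_top {H : G.Subgraph} (hH : H ≠ ⊤)
    (hcov : ∀ x, ∃ e ∈ G.edgeSet, x ∈ e) : H.edgeSet ⊂ G.edgeSet := by
  refine H.edgeSet_subset.ssubset_of_ne fun heq => hH (Subgraph.ext ?_ ?_)
  · refine Set.eq_univ_of_forall fun x => ?_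
    obtain ⟨e, he, hx⟩ := hcov x
    exact Subgraph.mem_verts_of_mem_edge (heq ▸ he) hx
  · ext a b
    rw [← Subgraph.mem_edgeSet, heq, Subgraph.top_adj, mem_edgeSet]

end LineGraph

section Star

variable {V : Type*} {G : SimpleGraph V}

def starSubgraph (G : SimpleGraph V) (u : V) : G.Subgraph where
  verts := insert u (G.neighborSet u)
  Adj a b := G.Adj a b ∧ (a = u ∨ b = u)
  adj_sub h := h.1
  edge_vert := by
    rintro a b ⟨hab, rfl | rfl⟩
    · exact Set.mem_insert _ _
    · exact Set.mem_insert_of_mem _ hab.symm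
  symm := ⟨fun _ _ h => ⟨h.1.symm, h.2.symm⟩⟩

theorem edgeSet_starSubgraph (u : V) : (G.starSubgraph u).edgeSet = G.incidenceSet u := by
  ext e
  induction e using Sym2.ind with
  | _ a b =>
    simp only [Subgraph.mem_edgeSet, starSubgraph, incidenceSet, Set.mem_ofPred_eq, mem_edgeSet,
      Sym2.mem_iff]
    grind

theorem listChromaticIndex_starSubgraph [Fintype V] [DecidableRel G.Adj] (u : V) :
    listChromaticIndex (G.starSubgraph u).coe = G.degree u := by
  classical
  rw [listChromaticIndex_eq_ncard_of_pairwise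
      (Subgraph.pairwise_edgeSet_coe (z := u) (by simp [edgeSet_starSubgraph, incidenceSet])),
    Subgraph.ncard_edgeSet_coe, edgeSet_starSubgraph, ← card_incidenceSet_eq_degree,
    Set.ncard_eq_toFinset_card', Set.toFinset_card]

theorem eq_starGraph_of_starSubgraph_eq_top {u : V} (h : G.starSubgraph u = ⊤) :
    G = starGraph u := by
  have hverts : ∀ x, x = u ∨ G.Adj u x := fun x => by
    have : x ∈ (G.starSubgraph u).verts := h ▸ Set.mem_univ x
    simpa [starSubgraph] using this
  have hadj : ∀ a b, G.Adj a b → a = u ∨ b = u := fun a b hab => by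
    have : (G.starSubgraph u).Adj a b := h ▸ hab
    exact this.2
  ext a b
  rw [starGraph_adj]
  refine ⟨fun hab => ⟨hab.ne, hadj a b hab⟩, ?_⟩
  rintro ⟨hne, rfl | rfl⟩
  · exact (hverts b).resolve_left hne.symm
  · exact ((hverts a).resolve_left hne).symm

theorem mem_of_mem_edgeSet_starGraph {r : V} {e : Sym2 V} (he : e ∈ (starGraph r).edgeSet) :
    r ∈ e := by
  induction e using Sym2.ind with
  | _ a b =>
    rcases ((starGraph_adj).1 he).2 with rfl | rfl
    · exact Sym2.mem_mk_left _ _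
    · exact Sym2.mem_mk_right _ _

theorem edgeListCritical_starGraph [Finite V] {r : V} (h : (starGraph r).edgeSet.Nonempty) :
    EdgeListCritical (starGraph r) := by
  intro H hH
  have hcov : ∀ x, ∃ e ∈ (starGraph r).edgeSet, x ∈ e := by
    intro x
    by_cases hx : x = r
    · obtain ⟨e, he⟩ := h
      exact ⟨e, he, hx ▸ mem_of_mem_edgeSet_starGraph he⟩
    · exact ⟨s(r, x), starGraph_center_adj (Ne.symm hx), Sym2.mem_mk_right _ _⟩
  calc listChromaticIndex H.coe ≤ H.edgeSet.ncard := H.listChromaticIndex_coe_le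
    _ < (starGraph r).edgeSet.ncard := Set.ncard_lt_ncard (H.edgeSet_ssubset_of_ne_top hH hcov)
    _ = listChromaticIndex (starGraph r) :=
      (listChromaticIndex_eq_ncard_of_pairwise fun e he f hf _ =>
        ⟨r, mem_of_mem_edgeSet_starGraph he, mem_of_mem_edgeSet_starGraph hf⟩).symm

def completeBipartiteGraphIsoStarGraph [DecidableEq V] (r : V) :
    completeBipartiteGraph {a // a = r} {a // ¬a = r} ≃g starGraph r where
  toEquiv := Equiv.sumCompl (· = r)
  map_rel_iff' := by
    rintro (⟨a, ha⟩ | ⟨a, ha⟩) (⟨b, hb⟩ | ⟨b, hb⟩) <;>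
      grind [Equiv.sumCompl_apply_inl, Equiv.sumCompl_apply_inr, completeBipartiteGraph_adj,
        starGraph_adj]

theorem exists_iso_completeBipartiteGraph_iff_eq_starGraph [Fintype V] :
    (∃ n, Nonempty (G ≃g completeBipartiteGraph (Fin 1) (Fin n))) ↔ ∃ r, G = starGraph r := by
  classical
  constructor
  · rintro ⟨n, ⟨e⟩⟩
    refine ⟨e.symm (Sum.inl 0), ?_⟩
    ext a b
    have hleft : ∀ x, (e x).isLeft ↔ x = e.symm (Sum.inl 0) := fun x => by
      rw [e.eq_symm_apply]
      rcases e x with i | j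
      · simp [Fin.fin_one_eq_zero i]
      · simp
    rw [← e.map_adj_iff, completeBipartiteGraph_adj, starGraph_adj, ← hleft, ← hleft,
      ← e.injective.ne_iff]
    rcases e a with i | i <;> rcases e b with j | j <;> simp [Fin.fin_one_eq_zero]
  · rintro ⟨r, rfl⟩
    exact ⟨_, ⟨(completeBipartiteGraphIsoStarGraph r).symm.trans
      (completeBipartiteGraphCongr (Fintype.equivFinOfCardEq (Fintype.card_subtype_eq r))
        (Fintype.equivFin _))⟩⟩

end Star

end SimpleGraph

section Kernel

variable {E : Type*}

def IsKernel (D : E → E → Prop) (S K : Finset E) : Prop :=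
  K ⊆ S ∧ (∀ a ∈ K, ∀ b ∈ K, ¬D a b) ∧ ∀ a ∈ S, a ∉ K → ∃ b ∈ K, D a b

/-- Give some colour `α` to a kernel of the vertices whose lists contain `α`, and recurse on the
other vertices with `α` removed from their lists: a vertex loses `α` only if it also loses an
out-neighbour. -/
theorem exists_listColoring_of_isKernel [DecidableEq E] {D : E → E → Prop} [DecidableRel D]
    (hker : ∀ S, ∃ K, IsKernel D S K) (L : E → Finset ℕ) (T : Finset E)
    (hL : ∀ e ∈ T, #{f ∈ T | D e f} < #(L e)) :
    ∃ col : E → ℕ, (∀ e ∈ T, col e ∈ L e) ∧ ∀ e ∈ T, ∀ f ∈ T, D e f → col e ≠ col f := by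
  induction T using Finset.strongInduction generalizing L with
  | H T ih =>
  rcases T.eq_empty_or_nonempty with rfl | ⟨e₀, he₀⟩
  · exact ⟨0, by simp, by simp⟩
  obtain ⟨α, hα⟩ : (L e₀).Nonempty := card_pos.1 (Nat.zero_lt_of_lt (hL e₀ he₀))
  obtain ⟨K, hKS, hKind, hKabs⟩ := hker {e ∈ T | α ∈ L e}
  have hKT : K ⊆ T := hKS.trans (filter_subset _ _)
  have hK : K.Nonempty := by
    rw [nonempty_iff_ne_empty]
    rintro rfl
    obtain ⟨b, hb, -⟩ := hKabs e₀ (mem_filter.2 ⟨he₀, hα⟩) (notMem_empty e₀)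
    exact notMem_empty b hb
  have hL' : ∀ e ∈ T \ K, #{f ∈ T \ K | D e f} < #((L e).erase α) := by
    intro e he
    rw [mem_sdiff] at he
    have hsub : {f ∈ T \ K | D e f} ⊆ {f ∈ T | D e f} := filter_subset_filter _ sdiff_subset
    by_cases heα : α ∈ L e
    · obtain ⟨b, hbK, heb⟩ := hKabs e (mem_filter.2 ⟨he.1, heα⟩) he.2
      have hbout : b ∈ {f ∈ T | D e f} := mem_filter.2 ⟨hKT hbK, heb⟩
      have hbout' : b ∉ {f ∈ T \ K | D e f} := fun h => (mem_sdiff.1 (mem_filter.1 h).1).2 hbK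
      have := card_lt_card ((ssubset_iff_of_subset hsub).2 ⟨b, hbout, hbout'⟩)
      have := hL e he.1
      rw [card_erase_of_mem heα]
      omega
    · rw [erase_eq_of_notMem heα]
      exact (card_le_card hsub).trans_lt (hL e he.1)
  obtain ⟨col, hcolL, hcol⟩ := ih (T \ K) (sdiff_ssubset hKT hK) _ hL'
  refine ⟨fun e => if e ∈ K then α else col e, fun e he => ?_, fun e he f hf hef => ?_⟩
  · dsimp only
    split_ifs with heK
    · exact (mem_filter.1 (hKS heK)).2
    · exact mem_of_mem_erase (hcolL e (mem_sdiff.2 ⟨he, heK⟩))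
  · have hcolα : ∀ g ∈ T, g ∉ K → col g ≠ α := fun g hg hgK =>
      ne_of_mem_erase (hcolL g (mem_sdiff.2 ⟨hg, hgK⟩))
    by_cases heK : e ∈ K <;> by_cases hfK : f ∈ K <;> simp only [heK, hfK, if_true, if_false]
    · exact absurd hef (hKind e heK f hfK)
    · exact (hcolα f hf hfK).symm
    · exact hcolα e he heK
    · exact hcol e (mem_sdiff.2 ⟨he, heK⟩) f (mem_sdiff.2 ⟨hf, hfK⟩) hef

variable {X Y : Type*} (p : E → X) (q : E → Y) (ψ : E → ℕ)

def galvinOrientation (e f : E) : Prop :=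
  (p e = p f ∧ ψ f < ψ e) ∨ (q e = q f ∧ ψ e < ψ f)

/-- Read `E` as the edges of a bipartite multigraph, `p` and `q` as the endpoints in the two
parts and `ψ` as preferences (`p`-vertices prefer small, `q`-vertices large values): kernels are
then stable matchings. If some `p`-favourite `f` is beaten at its `q`-vertex by `e`, discard `e`:
a kernel of the rest still absorbs `e`, through `f` or through what absorbs `f`. -/
theorem exists_isKernel_galvinOrientation (S : Finset E) :
    ∃ K, IsKernel (galvinOrientation p q ψ) S K := by
  classical
  induction S using Finset.strongInduction with
  | H S ih =>
  set P := {e ∈ S | ∀ f ∈ S, p f = p e → ψ e ≤ ψ f}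
  by_cases hbad : ∃ e ∈ S, ∃ f ∈ P, q e = q f ∧ ψ e < ψ f
  · obtain ⟨e, he, f, hf, hq, hlt⟩ := hbad
    obtain ⟨K, hKS, hKind, hKabs⟩ := ih (S.erase e) (erase_ssubset he)
    refine ⟨K, hKS.trans (erase_subset _ _), hKind, fun a ha haK => ?_⟩
    by_cases hae : a = e
    swap
    · exact hKabs a (mem_erase.2 ⟨hae, ha⟩) haK
    subst hae
    have hfS : f ∈ S.erase a := mem_erase.2 ⟨(ne_of_lt hlt).symm ∘ congrArg ψ, (mem_filter.1 hf).1⟩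
    by_cases hfK : f ∈ K
    · exact ⟨f, hfK, Or.inr ⟨hq, hlt⟩⟩
    obtain ⟨g, hgK, ⟨hp', hlt'⟩ | ⟨hq', hlt'⟩⟩ := hKabs f hfS hfK
    · exact absurd ((mem_filter.1 hf).2 g (mem_of_mem_erase (hKS hgK)) hp'.symm) (not_le.2 hlt')
    · exact ⟨g, hgK, Or.inr ⟨hq.trans hq', hlt.trans hlt'⟩⟩
  push Not at hbad
  refine ⟨P, filter_subset _ _, ?_, fun a ha haP => ?_⟩
  · rintro a ha b hb (⟨hp, hlt⟩ | ⟨hq, hlt⟩)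
    · exact absurd ((mem_filter.1 ha).2 b (mem_filter.1 hb).1 hp.symm) (not_le.2 hlt)
    · exact absurd (hbad a (mem_filter.1 ha).1 b hb hq) (not_le.2 hlt)
  obtain ⟨f, hf, hpf, hlt⟩ : ∃ f ∈ S, p f = p a ∧ ψ f < ψ a := by
    simpa [P, ha] using haP
  obtain ⟨g, hg, hgmin⟩ := exists_min_image {f ∈ S | p f = p a} ψ ⟨a, mem_filter.2 ⟨ha, rfl⟩⟩
  rw [mem_filter] at hg
  refine ⟨g, mem_filter.2 ⟨hg.1, fun f hf hpf => hgmin f (mem_filter.2 ⟨hf, hpf.trans hg.2⟩)⟩,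
    Or.inl ⟨hg.2.symm, (hgmin f (mem_filter.2 ⟨hf, hpf⟩)).trans_lt hlt⟩⟩

variable {p q ψ}

theorem card_filter_galvinOrientation_lt {N : ℕ} (hp : ∀ e f, p e = p f → ψ e = ψ f → e = f)
    (hq : ∀ e f, q e = q f → ψ e = ψ f → e = f) (hψ : ∀ e, ψ e < N) (e : E) (T : Finset E)
    [DecidablePred (galvinOrientation p q ψ e)] :
    #{f ∈ T | galvinOrientation p q ψ e f} < N := by
  have hinj : Set.InjOn ψ ({f ∈ T | galvinOrientation p q ψ e f} : Finset E) := by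
    intro f hf g hg hfg
    simp only [mem_coe, mem_filter] at hf hg
    rcases hf.2 with ⟨hpf, hltf⟩ | ⟨hqf, hltf⟩ <;> rcases hg.2 with ⟨hpg, hltg⟩ | ⟨hqg, hltg⟩
    · exact hp f g (hpf.symm.trans hpg) hfg
    · omega
    · omega
    · exact hq f g (hqf.symm.trans hqg) hfg
  have hmaps : ∀ f ∈ {f ∈ T | galvinOrientation p q ψ e f}, ψ f ∈ (range N).erase (ψ e) := by
    intro f hf
    refine mem_erase.2 ⟨?_, mem_range.2 (hψ f)⟩
    rcases (mem_filter.1 hf).2 with ⟨-, hlt⟩ | ⟨-, hlt⟩ <;> omega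
  have := card_le_card_of_injOn ψ hmaps hinj
  rw [card_erase_of_mem (mem_range.2 (hψ e)), card_range] at this
  have := hψ e
  omega

/-- Galvin's theorem, for the line graph (or any subgraph of it) of the bipartite multigraph with
edge set `E` and endpoint maps `p`, `q`, properly edge-coloured by `ψ`. -/
theorem choosable_of_fiberwise_injective [Finite E] {H : SimpleGraph E}
    (hH : ∀ e f, H.Adj e f → p e = p f ∨ q e = q f) {N : ℕ}
    (hp : ∀ e f, p e = p f → ψ e = ψ f → e = f) (hq : ∀ e f, q e = q f → ψ e = ψ f → e = f)
    (hψ : ∀ e, ψ e < N) : Choosable H N := by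
  classical
  have := Fintype.ofFinite E
  intro L hL
  obtain ⟨col, hcolL, hcol⟩ := exists_listColoring_of_isKernel
    (exists_isKernel_galvinOrientation p q ψ) L univ
    (fun e _ => hL e ▸ card_filter_galvinOrientation_lt hp hq hψ e univ)
  refine ⟨col, fun e f hef => ?_, fun e => hcolL e (mem_univ e)⟩
  have hne : ψ e ≠ ψ f := by
    rcases hH e f hef with h | h
    · exact fun h' => hef.ne (hp e f h h')
    · exact fun h' => hef.ne (hq e f h h')
  have : galvinOrientation p q ψ e f ∨ galvinOrientation p q ψ f e := by
    unfold galvinOrientation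
    rcases hH e f hef with h | h <;> rcases lt_or_gt_of_ne hne with hlt | hlt <;> simp_all
  rcases this with h | h
  · exact hcol e (mem_univ e) f (mem_univ f) h
  · exact (hcol f (mem_univ f) e (mem_univ e) h).symm

end Kernel

section EdgeColoring

variable {V : Type*}

def IsProperEdgeColoringOn (F : Set (Sym2 V)) (ψ : Sym2 V → ℕ) : Prop :=
  ∀ ⦃e⦄, e ∈ F → ∀ ⦃f⦄, f ∈ F → e ≠ f → ∀ ⦃w⦄, w ∈ e → w ∈ f → ψ e ≠ ψ f

def IsMissingAt (F : Set (Sym2 V)) (ψ : Sym2 V → ℕ) (x : V) (γ : ℕ) : Prop :=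
  ∀ f ∈ F, x ∈ f → ψ f ≠ γ

variable {F : Set (Sym2 V)} {ψ : Sym2 V → ℕ}

theorem IsProperEdgeColoringOn.update_insert [DecidableEq V] (hψ : IsProperEdgeColoringOn F ψ)
    {u v : V} (huv : s(u, v) ∉ F) {γ : ℕ} (hu : IsMissingAt F ψ u γ) (hv : IsMissingAt F ψ v γ) :
    IsProperEdgeColoringOn (insert s(u, v) F) (Function.update ψ s(u, v) γ) := by
  have hnew : ∀ f ∈ F, ∀ w ∈ s(u, v), w ∈ f → γ ≠ ψ f := by
    intro f hf w hw hwf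
    rcases Sym2.mem_iff.1 hw with rfl | rfl
    · exact (hu f hf hwf).symm
    · exact (hv f hf hwf).symm
  have hold : ∀ f ∈ F, Function.update ψ s(u, v) γ f = ψ f := fun f hf =>
    Function.update_of_ne (ne_of_mem_of_not_mem hf huv) _ _
  intro e he f hf hef w hwe hwf
  rcases Set.mem_insert_iff.1 he with rfl | he <;> rcases Set.mem_insert_iff.1 hf with rfl | hf
  · exact absurd rfl hef
  · rw [Function.update_self, hold f hf]; exact hnew f hf w hwe hwf
  · rw [Function.update_self, hold e he]; exact (hnew e he w hwf hwe).symm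
  · rw [hold e he, hold f hf]; exact hψ he hf hef hwe hwf

theorem exists_lt_isMissingAt [Fintype V] {G : SimpleGraph V} [DecidableRel G.Adj]
    {F : Finset (Sym2 V)} (hF : ↑F ⊆ G.edgeSet) {e : Sym2 V} (he : e ∈ G.edgeSet) (heF : e ∉ F)
    {x : V} (hx : x ∈ e) {N : ℕ} (hdeg : G.degree x ≤ N) (ψ : Sym2 V → ℕ) :
    ∃ γ < N, IsMissingAt F ψ x γ := by
  classical
  set U := {f ∈ F | x ∈ f}
  have heI : e ∈ G.incidenceFinset x := (mem_incidenceFinset _ _ _).2 ⟨he, hx⟩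
  have hU : U ⊆ (G.incidenceFinset x).erase e := fun f hf => by
    rw [mem_filter] at hf
    exact mem_erase.2 ⟨ne_of_mem_of_not_mem hf.1 heF, (mem_incidenceFinset _ _ _).2 ⟨hF hf.1, hf.2⟩⟩
  have hcard : #(U.image ψ) < N := by
    have hpos := card_pos.2 ⟨e, heI⟩
    rw [card_incidenceFinset_eq_degree] at hpos
    calc #(U.image ψ) ≤ #U := card_image_le
      _ ≤ #((G.incidenceFinset x).erase e) := card_le_card hU
      _ = G.degree x - 1 := by rw [card_erase_of_mem heI, card_incidenceFinset_eq_degree]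
      _ < N := by omega
  obtain ⟨γ, hγ⟩ : (range N \ U.image ψ).Nonempty := by
    rw [← card_pos]
    have := le_card_sdiff (U.image ψ) (range N)
    rw [card_range] at this
    omega
  rw [mem_sdiff, mem_range, mem_image, not_exists] at hγ
  exact ⟨γ, hγ.1, fun f hf hxf hfγ => hγ.2 f ⟨mem_filter.2 ⟨hf, hxf⟩, hfγ⟩⟩

def kempeGraph (F : Set (Sym2 V)) (ψ : Sym2 V → ℕ) (α β : ℕ) : SimpleGraph V :=
  fromEdgeSet {e | e ∈ F ∧ (ψ e = α ∨ ψ e = β)}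

open scoped Classical in
noncomputable def kempeSwap (F : Set (Sym2 V)) (ψ : Sym2 V → ℕ) (α β : ℕ) (v : V)
    (f : Sym2 V) : ℕ :=
  if ∃ w ∈ f, (kempeGraph F ψ α β).Reachable v w then Equiv.swap α β (ψ f) else ψ f

variable {α β : ℕ} {v : V}

open scoped Classical in
/-- An edge of `F` with one endpoint outside the component keeps its colour: had it been
coloured `α` or `β`, both its endpoints would lie in the component. -/
theorem kempeSwap_apply_of_mem {f : Sym2 V} (hf : f ∈ F) {w : V} (hw : w ∈ f) :
    kempeSwap F ψ α β v f =
      if (kempeGraph F ψ α β).Reachable v w then Equiv.swap α β (ψ f) else ψ f := by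
  unfold kempeSwap
  by_cases hR : (kempeGraph F ψ α β).Reachable v w
  · rw [if_pos ⟨w, hw, hR⟩, if_pos hR]
  rw [if_neg hR]
  split_ifs with h
  · obtain ⟨x, hx, hRx⟩ := h
    have hxw : x ≠ w := fun hxw => hR (hxw ▸ hRx)
    have hadj : ψ f = α ∨ ψ f = β → (kempeGraph F ψ α β).Adj x w := fun hcol => by
      rw [kempeGraph, fromEdgeSet_adj, ← (Sym2.mem_and_mem_iff hxw).1 ⟨hx, hw⟩]
      exact ⟨⟨hf, hcol⟩, hxw⟩
    exact Equiv.swap_apply_of_ne_of_ne (fun h => hR (hRx.trans (hadj (Or.inl h)).reachable))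
      (fun h => hR (hRx.trans (hadj (Or.inr h)).reachable))
  · rfl

theorem IsProperEdgeColoringOn.kempeSwap (hψ : IsProperEdgeColoringOn F ψ) :
    IsProperEdgeColoringOn F (kempeSwap F ψ α β v) := by
  intro e he f hf hef w hwe hwf
  rw [kempeSwap_apply_of_mem he hwe, kempeSwap_apply_of_mem hf hwf]
  split_ifs
  · exact (Equiv.injective _).ne (hψ he hf hef hwe hwf)
  · exact hψ he hf hef hwe hwf

theorem kempeSwap_lt {N : ℕ} {f : Sym2 V} (hf : ψ f < N) (hα : α < N) (hβ : β < N) :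
    kempeSwap F ψ α β v f < N := by
  unfold kempeSwap
  split_ifs
  · rw [Equiv.swap_apply_def]
    split_ifs <;> assumption
  · exact hf

theorem isMissingAt_kempeSwap_self (hv : IsMissingAt F ψ v β) :
    IsMissingAt F (kempeSwap F ψ α β v) v α := by
  intro f hf hvf
  rw [kempeSwap_apply_of_mem hf hvf, if_pos (Reachable.refl v), Ne, Equiv.swap_apply_eq_iff,
    Equiv.swap_apply_left]
  exact hv f hf hvf

theorem isMissingAt_kempeSwap_of_not_reachable {u : V} {γ : ℕ} (hu : IsMissingAt F ψ u γ)
    (hR : ¬(kempeGraph F ψ α β).Reachable v u) : IsMissingAt F (kempeSwap F ψ α β v) u γ := by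
  intro f hf huf
  rw [kempeSwap_apply_of_mem hf huf, if_neg hR]
  exact hu f hf huf

variable {G : SimpleGraph V} (c : G.Coloring (Fin 2))
include c

/-- Along a path of the Kempe graph ending at `v`, where `β` is missing, the colours alternate
starting with `α` at `v`; bipartiteness turns this into the parity of the colour classes. -/
theorem kempeGraph_color_iff (hF : F ⊆ G.edgeSet) (hψ : IsProperEdgeColoringOn F ψ)
    (hv : IsMissingAt F ψ v β) {x : V} (p : (kempeGraph F ψ α β).Walk x v) (hp : p.IsPath)
    {y : V} (hyx : (kempeGraph F ψ α β).Adj y x) (hy : y ∉ p.support) :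
    ψ s(y, x) = α ↔ c y ≠ c v := by
  have hF' : ∀ {a b}, (kempeGraph F ψ α β).Adj a b →
      s(a, b) ∈ F ∧ (ψ s(a, b) = α ∨ ψ s(a, b) = β) ∧ c a ≠ c b := fun hab => by
    rw [kempeGraph, fromEdgeSet_adj] at hab
    exact ⟨hab.1.1, hab.1.2, c.valid (hF hab.1.1)⟩
  induction p generalizing y with
  | nil =>
    obtain ⟨hyxF, hcol, hc⟩ := hF' hyx
    exact iff_of_true (hcol.resolve_right (hv _ hyxF (Sym2.mem_mk_right _ _))) hc
  | @cons x x' z hxx' p ih =>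
    rw [Walk.cons_isPath_iff] at hp
    rw [Walk.support_cons, List.mem_cons, not_or] at hy
    have ih := ih hv hp.1 hxx' hp.2
    obtain ⟨hyxF, hcol, hc⟩ := hF' hyx
    obtain ⟨hxx'F, hcol', -⟩ := hF' hxx'
    have hne : s(y, x) ≠ s(x, x') := by
      rw [Ne, Sym2.eq_iff]
      rintro (⟨rfl, -⟩ | ⟨rfl, -⟩)
      · exact hy.1 rfl
      · exact hy.2 p.start_mem_support
    have := hψ hyxF hxx'F hne (Sym2.mem_mk_right _ _) (Sym2.mem_mk_left _ _)
    rcases eq_or_ne (c x) (c z) with hx | hx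
    · have := fun h => ih.1 h hx
      exact ⟨fun _ => by omega, fun _ => by omega⟩
    · have := ih.2 hx
      exact ⟨fun _ => by omega, fun _ => by omega⟩

theorem not_reachable_kempeGraph (hF : F ⊆ G.edgeSet) (hψ : IsProperEdgeColoringOn F ψ) {u : V}
    (huv : G.Adj u v) (hu : IsMissingAt F ψ u α) (hv : IsMissingAt F ψ v β) :
    ¬(kempeGraph F ψ α β).Reachable v u := by
  intro hR
  obtain ⟨p, hp⟩ := hR.symm.exists_isPath
  cases p with
  | nil => exact huv.ne rfl
  | cons hux p =>
    rw [Walk.cons_isPath_iff] at hp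
    have hcol := (kempeGraph_color_iff c hF hψ hv p hp.1 hux hp.2).2 (c.valid huv)
    rw [kempeGraph, fromEdgeSet_adj] at hux
    exact hu _ hux.1.1 (Sym2.mem_mk_left _ _) hcol

theorem exists_isProperEdgeColoringOn_insert [DecidableEq V] (hF : F ⊆ G.edgeSet)
    (hψ : IsProperEdgeColoringOn F ψ) {N : ℕ} (hψN : ∀ f ∈ F, ψ f < N) {u : V} (huv : G.Adj u v)
    (huvF : s(u, v) ∉ F)
    (hα : α < N) (hβ : β < N) (hu : IsMissingAt F ψ u α) (hv : IsMissingAt F ψ v β) :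
    ∃ ψ', IsProperEdgeColoringOn (insert s(u, v) F) ψ' ∧ ∀ f ∈ insert s(u, v) F, ψ' f < N := by
  refine ⟨Function.update (kempeSwap F ψ α β v) s(u, v) α,
    hψ.kempeSwap.update_insert huvF
      (isMissingAt_kempeSwap_of_not_reachable hu (not_reachable_kempeGraph c hF hψ huv hu hv))
      (isMissingAt_kempeSwap_self hv), fun f hf => ?_⟩
  rcases Set.mem_insert_iff.1 hf with rfl | hf
  · rwa [Function.update_self]
  · rw [Function.update_of_ne (ne_of_mem_of_not_mem hf huvF)]
    exact kempeSwap_lt (hψN f hf) hα hβ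

end EdgeColoring

namespace SimpleGraph

variable {V : Type*} {G : SimpleGraph V}

theorem exists_isProperEdgeColoringOn_edgeSet [Fintype V] [DecidableRel G.Adj]
    (c : G.Coloring (Fin 2)) {N : ℕ} (hdeg : ∀ v, G.degree v ≤ N) :
    ∃ ψ, IsProperEdgeColoringOn G.edgeSet ψ ∧ ∀ e ∈ G.edgeSet, ψ e < N := by
  classical
  suffices ∀ F : Finset (Sym2 V), ↑F ⊆ G.edgeSet →
      ∃ ψ, IsProperEdgeColoringOn F ψ ∧ ∀ e ∈ (F : Set (Sym2 V)), ψ e < N by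
    simpa using this G.edgeFinset (by simp)
  intro F
  induction F using Finset.induction_on with
  | empty => exact fun _ => ⟨0, by simp [IsProperEdgeColoringOn], by simp⟩
  | @insert e F heF ih =>
    intro hF
    rw [coe_insert, Set.insert_subset_iff] at hF
    obtain ⟨ψ, hψ, hψN⟩ := ih hF.2
    induction e using Sym2.ind with
    | _ u v =>
    obtain ⟨α, hα, hu⟩ := exists_lt_isMissingAt hF.2 hF.1 heF (Sym2.mem_mk_left u v) (hdeg u) ψ
    obtain ⟨β, hβ, hv⟩ := exists_lt_isMissingAt hF.2 hF.1 heF (Sym2.mem_mk_right u v) (hdeg v) ψ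
    rw [coe_insert]
    exact exists_isProperEdgeColoringOn_insert c hF.2 hψ hψN ((G.mem_edgeSet).1 hF.1) heF hα hβ
      hu hv

namespace Coloring

variable (c : G.Coloring (Fin 2))

theorem exists_mem_edge_color_eq (e : G.edgeSet) (i : Fin 2) : ∃ w ∈ (e : Sym2 V), c w = i := by
  obtain ⟨e, he⟩ := e
  induction e using Sym2.ind with
  | _ a b =>
    have := c.valid ((G.mem_edgeSet).1 he)
    by_cases ha : c a = i
    · exact ⟨a, Sym2.mem_mk_left a b, ha⟩
    · exact ⟨b, Sym2.mem_mk_right a b, by omega⟩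

noncomputable def endpoint (i : Fin 2) (e : G.edgeSet) : V :=
  (c.exists_mem_edge_color_eq e i).choose

theorem endpoint_mem (i : Fin 2) (e : G.edgeSet) : c.endpoint i e ∈ (e : Sym2 V) :=
  (c.exists_mem_edge_color_eq e i).choose_spec.1

theorem color_endpoint (i : Fin 2) (e : G.edgeSet) : c (c.endpoint i e) = i :=
  (c.exists_mem_edge_color_eq e i).choose_spec.2

theorem eq_of_mem_edge_of_color_eq {e : Sym2 V} (he : e ∈ G.edgeSet) {w w' : V} (hw : w ∈ e)
    (hw' : w' ∈ e) (h : c w = c w') : w = w' := by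
  induction e using Sym2.ind with
  | _ a b =>
    have := c.valid ((G.mem_edgeSet).1 he)
    rcases Sym2.mem_iff.1 hw with rfl | rfl <;> rcases Sym2.mem_iff.1 hw' with rfl | rfl <;>
      first | rfl | exact (this h).elim | exact (this h.symm).elim

theorem endpoint_color_eq {e : G.edgeSet} {w : V} (hw : w ∈ (e : Sym2 V)) :
    c.endpoint (c w) e = w :=
  c.eq_of_mem_edge_of_color_eq e.2 (c.endpoint_mem _ e) hw (c.color_endpoint _ e)

end Coloring

theorem choosable_lineGraph_of_colorable_two [Fintype V] [DecidableRel G.Adj]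
    (hG : G.Colorable 2) {N : ℕ} (hdeg : ∀ v, G.degree v ≤ N) : Choosable G.lineGraph N := by
  obtain ⟨c⟩ := hG
  obtain ⟨ψ, hψ, hψN⟩ := exists_isProperEdgeColoringOn_edgeSet c hdeg
  have hinj : ∀ i (e f : G.edgeSet), c.endpoint i e = c.endpoint i f → ψ e = ψ f → e = f :=
    fun i e f h hψef => by_contra fun hne => hψ e.2 f.2 (Subtype.coe_ne_coe.2 hne)
      (c.endpoint_mem i e) (h ▸ c.endpoint_mem i f) hψef
  refine choosable_of_fiberwise_injective (fun e f hef => ?_) (hinj 0) (hinj 1) fun e => hψN e e.2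
  obtain ⟨-, w, hwe, hwf⟩ := lineGraph_adj_iff_exists.1 hef
  rcases (by omega : c w = 0 ∨ c w = 1) with h | h
  · left; rw [← h, c.endpoint_color_eq hwe, c.endpoint_color_eq hwf]
  · right; rw [← h, c.endpoint_color_eq hwe, c.endpoint_color_eq hwf]

theorem eq_starGraph_of_edgeListCritical [Fintype V] [DecidableRel G.Adj] (hG : G.Colorable 2)
    (hcrit : EdgeListCritical G) {u : V} (hu : ∀ v, G.degree v ≤ G.degree u) :
    G = starGraph u := by
  refine eq_starGraph_of_starSubgraph_eq_top (by_contra fun hne => ?_)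
  have := hcrit _ hne
  rw [listChromaticIndex_starSubgraph] at this
  exact (listChromaticNumber_le_of_choosable
    (choosable_lineGraph_of_colorable_two hG hu)).not_gt this

end SimpleGraph

/-- The only bipartite `χ'_ℓ`-critical graphs with at least one edge are the
stars `K_{1,n}`. -/
theorem bipartite_edgeListCritical_iff_star
    {V : Type} [Fintype V] (G : SimpleGraph V)
    (hbip : G.Colorable 2) (hedge : G.edgeSet.Nonempty) :
    EdgeListCritical G ↔
      ∃ n : ℕ, Nonempty (G ≃g completeBipartiteGraph (Fin 1) (Fin n)) := by
  classical
  rw [exists_iso_completeBipartiteGraph_iff_eq_starGraph]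
  constructor
  · intro hcrit
    have : Nonempty V := ⟨hedge.some.out.1⟩
    obtain ⟨u, hu⟩ := Finite.exists_max fun v => G.degree v
    exact ⟨u, eq_starGraph_of_edgeListCritical hbip hcrit hu⟩
  · rintro ⟨r, rfl⟩
    exact edgeListCritical_starGraph hedge
end
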